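/- Let A, B ∈ GL(2,ℂ) with |det A| = |det B| = 1, and let u_A⁻, v_A⁺ etc. be as given by the singular value decomposition. Then |v_{AB}⁺ ∧ v_A⁺| ≤ ‖A‖⁻² ‖B‖² and |u_{BA}⁻ ∧ u_A⁻| ≤ ‖A‖⁻² ‖B‖². -/

import Mathlib

/-- The wedge (2×2 determinant) of two vectors in ℂ². -/
noncomputable def wedge (u v : Fin 2 → ℂ) : ℂ := u 0 * v 1 - u 1 * v 0

/-- Operator norm of a 2×2 complex matrix w.r.t. the Euclidean norm on ℂ². -/
noncomputable def opNorm (A : Matrix (Fin 2) (Fin 2) ℂ) : ℝ :=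
  ‖Matrix.toEuclideanCLM (𝕜 := ℂ) A‖

/-- `IsSVD A u⁺ u⁻ v⁺ v⁻` records the data coming from the polar (singular value)
decomposition of a matrix `A` with `|det A| = 1`:  orthonormal pairs `u⁺ ⊥ u⁻`,
`v⁺ ⊥ v⁻` of unit vectors with `A u⁺ = ‖A‖ v⁺` and `A u⁻ = ‖A‖⁻¹ v⁻`. -/
def IsSVD (A : Matrix (Fin 2) (Fin 2) ℂ)
    (up um vp vm : EuclideanSpace ℂ (Fin 2)) : Prop :=
  ‖up‖ = 1 ∧ ‖um‖ = 1 ∧ ‖vp‖ = 1 ∧ ‖vm‖ = 1 ∧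
    inner (𝕜 := ℂ) up um = (0 : ℂ) ∧ inner (𝕜 := ℂ) vp vm = (0 : ℂ) ∧
    A.mulVec up = (opNorm A : ℂ) • (vp : Fin 2 → ℂ) ∧
    A.mulVec um = ((opNorm A)⁻¹ : ℂ) • (vm : Fin 2 → ℂ)


open Matrix
open scoped Matrix.Norms.L2Operator InnerProductSpace ComplexConjugate

/-!
Write `J x = (x̄₁, -x̄₀)` on `ℂ²`; then `x ∧ y = ⟪J y, x⟫` and `adj M = -J Mᴴ J`, so Hadamard's
inequality `|x ∧ y| ≤ ‖x‖ ‖y‖` and `‖adj M‖ ≤ ‖M‖` both follow from `J` being an isometry.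
Since `v_{AB}⁺ = ‖AB‖⁻¹ A (B u_{AB}⁺)`, `v_A⁺ = ‖A‖⁻¹ A u_A⁺` and `Ax ∧ Ay = det A (x ∧ y)`,
Hadamard gives `‖AB‖ ‖A‖ |v_{AB}⁺ ∧ v_A⁺| ≤ ‖B‖`. The adjugate maps `v⁻` to a unimodular
multiple of `‖·‖ u⁻` and reverses products, so the same argument for `adj A`, `adj B` gives
`‖BA‖ ‖A‖ |u_{BA}⁻ ∧ u_A⁻| ≤ ‖B‖`. Finally `det B • A = A B adj B = adj B B A` yields
`‖A‖ ≤ ‖AB‖ ‖B‖` and `‖A‖ ≤ ‖BA‖ ‖B‖`.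
-/

lemma opNorm_eq_l2_opNorm (A : Matrix (Fin 2) (Fin 2) ℂ) : opNorm A = ‖A‖ := rfl

lemma wedge_smul_smul (a b : ℂ) (x y : Fin 2 → ℂ) : wedge (a • x) (b • y) = a * b * wedge x y := by
  simp only [wedge, Pi.smul_apply, smul_eq_mul]; ring

lemma wedge_mulVec (M : Matrix (Fin 2) (Fin 2) ℂ) (x y : Fin 2 → ℂ) :
    wedge (M *ᵥ x) (M *ᵥ y) = M.det * wedge x y := by
  simp only [wedge, mulVec, dotProduct, Fin.sum_univ_two, det_fin_two]; ring

noncomputable def conjPerp (x : EuclideanSpace ℂ (Fin 2)) : EuclideanSpace ℂ (Fin 2) :=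
  !₂[conj (x 1), -conj (x 0)]

lemma norm_conjPerp (x : EuclideanSpace ℂ (Fin 2)) : ‖conjPerp x‖ = ‖x‖ := by
  simp [conjPerp, EuclideanSpace.norm_eq, Fin.sum_univ_two, add_comm]

lemma inner_conjPerp_left (x y : EuclideanSpace ℂ (Fin 2)) : ⟪conjPerp y, x⟫_ℂ = wedge x y := by
  simp [conjPerp, wedge, PiLp.inner_apply, Fin.sum_univ_two]; ring

lemma norm_wedge_le (x y : EuclideanSpace ℂ (Fin 2)) : ‖wedge x y‖ ≤ ‖x‖ * ‖y‖ := by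
  rw [← inner_conjPerp_left, mul_comm, ← norm_conjPerp y]
  exact norm_inner_le_norm _ _

lemma adjugate_mulVec_eq_neg_conjPerp (M : Matrix (Fin 2) (Fin 2) ℂ)
    (x : EuclideanSpace ℂ (Fin 2)) :
    WithLp.toLp 2 (M.adjugate *ᵥ x) = -conjPerp (WithLp.toLp 2 (Mᴴ *ᵥ conjPerp x)) := by
  ext i
  fin_cases i
  · simp [conjPerp, adjugate_fin_two, mulVec, dotProduct, Fin.sum_univ_two]
  · simp [conjPerp, adjugate_fin_two, mulVec, dotProduct, Fin.sum_univ_two, add_comm]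

lemma l2_opNorm_adjugate_le (M : Matrix (Fin 2) (Fin 2) ℂ) : ‖M.adjugate‖ ≤ ‖M‖ := by
  refine ContinuousLinearMap.opNorm_le_bound _ (norm_nonneg M) fun x => ?_
  calc ‖toEuclideanCLM (𝕜 := ℂ) M.adjugate x‖ = ‖WithLp.toLp 2 (Mᴴ *ᵥ conjPerp x)‖ := by
        rw [toEuclideanCLM_toLp, adjugate_mulVec_eq_neg_conjPerp, norm_neg, norm_conjPerp]
    _ ≤ ‖Mᴴ‖ * ‖conjPerp x‖ := l2_opNorm_mulVec _ _
    _ = ‖M‖ * ‖x‖ := by rw [l2_opNorm_conjTranspose, norm_conjPerp]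

lemma l2_opNorm_le_mul_right_mul {B : Matrix (Fin 2) (Fin 2) ℂ} (hB : ‖B.det‖ = 1)
    (A : Matrix (Fin 2) (Fin 2) ℂ) : ‖A‖ ≤ ‖A * B‖ * ‖B‖ :=
  calc ‖A‖ = ‖B.det • A‖ := by rw [norm_smul, hB, one_mul]
    _ = ‖A * B * B.adjugate‖ := by rw [Matrix.mul_assoc, mul_adjugate, Matrix.mul_smul, mul_one]
    _ ≤ ‖A * B‖ * ‖B‖ := (l2_opNorm_mul _ _).trans <|
      mul_le_mul_of_nonneg_left (l2_opNorm_adjugate_le B) (norm_nonneg _)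

lemma l2_opNorm_le_mul_left_mul {B : Matrix (Fin 2) (Fin 2) ℂ} (hB : ‖B.det‖ = 1)
    (A : Matrix (Fin 2) (Fin 2) ℂ) : ‖A‖ ≤ ‖B * A‖ * ‖B‖ :=
  calc ‖A‖ = ‖B.det • A‖ := by rw [norm_smul, hB, one_mul]
    _ = ‖B.adjugate * (B * A)‖ := by rw [← Matrix.mul_assoc, adjugate_mul, smul_mul, one_mul]
    _ ≤ ‖B * A‖ * ‖B‖ := (l2_opNorm_mul _ _).trans <| by
      rw [mul_comm]; exact mul_le_mul_of_nonneg_left (l2_opNorm_adjugate_le B) (norm_nonneg _)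

lemma l2_opNorm_pos_of_norm_det_eq_one {𝕜 n : Type*} [RCLike 𝕜] [Fintype n] [DecidableEq n]
    [Nonempty n] {M : Matrix n n 𝕜} (hM : ‖M.det‖ = 1) : 0 < ‖M‖ :=
  norm_pos_iff.mpr fun h => by simp [h] at hM

lemma adjugate_mulVec_eq_smul_of_mulVec_eq_smul {K n : Type*} [Field K] [Fintype n]
    [DecidableEq n] {A : Matrix n n K} {u v : n → K} {c : K} (hc : c ≠ 0) (h : A *ᵥ u = c • v) :
    A.adjugate *ᵥ v = (c⁻¹ * A.det) • u := by
  have : c • (A.adjugate *ᵥ v) = A.det • u := by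
    rw [← mulVec_smul, ← h, mulVec_mulVec, adjugate_mul, smul_mulVec, one_mulVec]
  rw [mul_smul, ← this, smul_smul, inv_mul_cancel₀ hc, one_smul]

lemma norm_mul_norm_mul_norm_wedge_le {M N : Matrix (Fin 2) (Fin 2) ℂ} (hM : ‖M.det‖ = 1)
    {p q x y : EuclideanSpace ℂ (Fin 2)} {a b : ℂ} (hp : ‖p‖ = 1) (hq : ‖q‖ = 1)
    (hx : (M * N) *ᵥ p = a • (x : Fin 2 → ℂ)) (hy : M *ᵥ q = b • (y : Fin 2 → ℂ)) :
    ‖a‖ * ‖b‖ * ‖wedge x y‖ ≤ ‖N‖ :=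
  calc ‖a‖ * ‖b‖ * ‖wedge x y‖ = ‖wedge (M *ᵥ N *ᵥ p) (M *ᵥ q)‖ := by
        rw [mulVec_mulVec, hx, hy, wedge_smul_smul, norm_mul, norm_mul]
    _ = ‖wedge (WithLp.toLp 2 (N *ᵥ p)) q‖ := by rw [wedge_mulVec, norm_mul, hM, one_mul]
    _ ≤ ‖WithLp.toLp 2 (N *ᵥ p)‖ * ‖q‖ := norm_wedge_le _ _
    _ ≤ ‖N‖ := by simpa [hp, hq] using l2_opNorm_mulVec N p

lemma le_inv_sq_mul_sq_of_mul_le {a b c w : ℝ} (ha : 0 < a) (hb : 0 ≤ b) (hw : 0 ≤ w)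
    (habc : a ≤ c * b) (h : c * a * w ≤ b) : w ≤ a⁻¹ ^ 2 * b ^ 2 := by
  rw [inv_pow, ← div_eq_inv_mul, le_div_iff₀ (by positivity)]
  nlinarith [mul_le_mul_of_nonneg_left habc (mul_nonneg ha.le hw)]

theorem stmt7 (A B : Matrix (Fin 2) (Fin 2) ℂ)
    (hA : ‖A.det‖ = 1) (hB : ‖B.det‖ = 1)
    (uAp uAm vAp vAm uABp uABm vABp vABm uBAp uBAm vBAp vBAm :
      EuclideanSpace ℂ (Fin 2))
    (hSVDA : IsSVD A uAp uAm vAp vAm)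
    (hSVDAB : IsSVD (A * B) uABp uABm vABp vABm)
    (hSVDBA : IsSVD (B * A) uBAp uBAm vBAp vBAm) :
    ‖wedge vABp vAp‖ ≤ (opNorm A)⁻¹ ^ 2 * opNorm B ^ 2 ∧
    ‖wedge uBAm uAm‖ ≤ (opNorm A)⁻¹ ^ 2 * opNorm B ^ 2 := by
  obtain ⟨huAp, huAm, -, hvAm, -, -, hAp, hAm⟩ := hSVDA
  obtain ⟨huABp, -, -, -, -, -, hABp, -⟩ := hSVDAB
  obtain ⟨-, -, -, hvBAm, -, -, -, hBAm⟩ := hSVDBA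
  simp only [opNorm_eq_l2_opNorm] at hAp hAm hABp hBAm ⊢
  have hBA : ‖(B * A).det‖ = 1 := by rw [det_mul, norm_mul, hA, hB, one_mul]
  have hA0 := l2_opNorm_pos_of_norm_det_eq_one hA
  have hBA0 := l2_opNorm_pos_of_norm_det_eq_one hBA
  constructor
  · refine le_inv_sq_mul_sq_of_mul_le hA0 (norm_nonneg B) (norm_nonneg _)
      (l2_opNorm_le_mul_right_mul hB A) ?_
    simpa using norm_mul_norm_mul_norm_wedge_le hA huABp huAp hABp hAp
  · refine le_inv_sq_mul_sq_of_mul_le hA0 (norm_nonneg B) (norm_nonneg _)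
      (l2_opNorm_le_mul_left_mul hB A) ?_
    have hadjBAm := adjugate_mulVec_eq_smul_of_mulVec_eq_smul (by simpa using hBA0.ne') hBAm
    have hadjAm := adjugate_mulVec_eq_smul_of_mulVec_eq_smul (by simpa using hA0.ne') hAm
    rw [adjugate_mul_distrib] at hadjBAm
    have hwedge :=
      norm_mul_norm_mul_norm_wedge_le (by simp [det_adjugate, hA]) hvBAm hvAm hadjBAm hadjAm
    simp only [inv_inv, norm_mul, Complex.norm_real, norm_norm, hBA, hA, mul_one] at hwedge
    exact hwedge.trans (l2_opNorm_adjugate_le B)
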